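/- arXiv:2001.09717 — 8 statements merged into one kernel-verified Lean document; each statement's English description precedes it below -/
import Mathlib

section
/- If positive integers x₁, x₂, y₁, y₂ satisfy (3^x₁ - 1)(3^x₂ - 1) = (5^y₁ - 1)(5^y₂ - 1), then neither x₁ nor x₂ is divisible by 4. -/
theorem stmt7 (x₁ x₂ y₁ y₂ : ℕ) (hx₁ : 0 < x₁) (hx₂ : 0 < x₂) (hy₁ : 0 < y₁) (hy₂ : 0 < y₂)
    (h : (3 ^ x₁ - 1) * (3 ^ x₂ - 1) = (5 ^ y₁ - 1) * (5 ^ y₂ - 1)) :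
    ¬ (4 ∣ x₁) ∧ ¬ (4 ∣ x₂) := by
  have key : ∀ x : ℕ, 4 ∣ x → (3 : ZMod 5) ^ x = 1 := by
    rintro x ⟨k, rfl⟩
    rw [pow_mul]
    have : (3 : ZMod 5) ^ 4 = 1 := by decide
    rw [this, one_pow]
  have hcast : ((( 3 ^ x₁ - 1) * (3 ^ x₂ - 1) : ℕ) : ZMod 5)
      = ((3 : ZMod 5) ^ x₁ - 1) * ((3 : ZMod 5) ^ x₂ - 1) := by
    push_cast [Nat.cast_sub (Nat.one_le_pow _ 3 (by norm_num)),
      Nat.cast_sub (Nat.one_le_pow _ 3 (by norm_num))]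
    ring
  have hrcast : ((( 5 ^ y₁ - 1) * (5 ^ y₂ - 1) : ℕ) : ZMod 5)
      = ((5 : ZMod 5) ^ y₁ - 1) * ((5 : ZMod 5) ^ y₂ - 1) := by
    push_cast [Nat.cast_sub (Nat.one_le_pow _ 5 (by norm_num)),
      Nat.cast_sub (Nat.one_le_pow _ 5 (by norm_num))]
    ring
  have h5 : (5 : ZMod 5) = 0 := by decide
  have hr : (((5 ^ y₁ - 1) * (5 ^ y₂ - 1) : ℕ) : ZMod 5) = 1 := by
    rw [hrcast, h5, zero_pow hy₁.ne', zero_pow hy₂.ne']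
    ring
  have hmain : ((3 : ZMod 5) ^ x₁ - 1) * ((3 : ZMod 5) ^ x₂ - 1) = 1 := by
    rw [← hcast, h, hr]
  constructor
  · intro hd
    rw [key x₁ hd, sub_self, zero_mul] at hmain
    exact absurd hmain (by decide)
  · intro hd
    rw [key x₂ hd, sub_self, mul_zero] at hmain
    exact absurd hmain (by decide)
end

section
/- The only solution in positive integers x₁ ≤ x₂, y₁ ≤ y₂ to the equation (3^x₁ - 1)(3^x₂ - 1) = (5^y₁ - 1)(5^y₂ - 1) is (x₁, x₂, y₁, y₂) = (1, 2, 1, 1). -/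
private lemma pow_period {x t q : ℕ} (hq : 1 < q) (ht : x ^ t % q = 1) (n : ℕ) :
    x ^ n ≡ x ^ (n % t) [MOD q] := by
  have h1 : x ^ t ≡ 1 [MOD q] := by
    show x ^ t % q = 1 % q
    rw [ht, Nat.mod_eq_of_lt hq]
  calc x ^ n = (x ^ t) ^ (n / t) * x ^ (n % t) := by
        rw [← pow_mul, ← pow_add, Nat.div_add_mod]
    _ ≡ 1 ^ (n / t) * x ^ (n % t) [MOD q] := (h1.pow _).mul (Nat.ModEq.refl _)
    _ = x ^ (n % t) := by rw [one_pow, one_mul]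

private lemma sub_one_mod {q x y : ℕ} (hx : 1 ≤ x) (hy : 1 ≤ y) (h : x ≡ y [MOD q]) :
    x - 1 ≡ y - 1 [MOD q] := by
  apply Nat.ModEq.add_right_cancel' 1
  simpa [Nat.sub_add_cancel hx, Nat.sub_add_cancel hy] using h

private lemma prodmod (q : ℕ) (hq : 1 < q) (x t : ℕ) (hx : 0 < x)
    (ht : x ^ t % q = 1) (m n : ℕ) :
    ((x ^ m - 1) * (x ^ n - 1)) % q = ((x ^ (m % t) - 1) * (x ^ (n % t) - 1)) % q := by
  have o1 : 1 ≤ x ^ m := Nat.one_le_pow _ _ hx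
  have o2 : 1 ≤ x ^ n := Nat.one_le_pow _ _ hx
  have o3 : 1 ≤ x ^ (m % t) := Nat.one_le_pow _ _ hx
  have o4 : 1 ≤ x ^ (n % t) := Nat.one_le_pow _ _ hx
  exact (sub_one_mod o1 o3 (pow_period hq ht m)).mul (sub_one_mod o2 o4 (pow_period hq ht n))

set_option maxHeartbeats 1000000 in
private lemma aux60 : ∀ i < 60, ∀ j < 60,
    ¬ ( ((3^(i%20)-1)*(3^(j%20)-1)) % 25 = 1
      ∧ ((3^(i%3)-1)*(3^(j%3)-1)) % 13 = 3
      ∧ ( ((3^(i%30)-1)*(3^(j%30)-1)) % 31 = 0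
        ∨ ((3^(i%30)-1)*(3^(j%30)-1)) % 31 = 3
        ∨ ((3^(i%30)-1)*(3^(j%30)-1)) % 31 = 16
        ∨ ((3^(i%30)-1)*(3^(j%30)-1)) % 31 = 18 ) ) := by decide

private lemma aux13a : ∀ i < 3, ∀ j < 3, ((3^i-1)*(3^j-1)) % 13 ≠ 2 := by decide

private lemma aux13b : ∀ i < 3, ∀ j < 3, ((3^i-1)*(3^j-1)) % 13 ≠ 10 := by decide

private lemma auxS : ∀ k < 3, ∀ l < 3,
    ((5^k-1)*(5^l-1)) % 31 = 0 ∨ ((5^k-1)*(5^l-1)) % 31 = 3 ∨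
    ((5^k-1)*(5^l-1)) % 31 = 16 ∨ ((5^k-1)*(5^l-1)) % 31 = 18 := by decide

private lemma aux9 : ∀ l < 6, ¬ ((5^(1%6)-1)*(5^l-1)) % 9 = 1 ∨ l = 3 := by decide

private lemma auxD : ∀ i < 6, ∀ j < 6,
    ¬ ( ((3^(i%3)-1)*(3^(j%3)-1)) % 13 = 3
      ∧ ((3^i-1)*(3^j-1)) % 7 = ((5^(1%6)-1)*(5^3-1)) % 7 ) := by decide

private lemma aux25 : ∀ k < 20, ¬ 3^k % 25 = 24 ∨ k = 10 := by decide

theorem stmt9 (x₁ x₂ y₁ y₂ : ℕ) (hx₁ : 0 < x₁) (hy₁ : 0 < y₁)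
    (hx : x₁ ≤ x₂) (hy : y₁ ≤ y₂)
    (h : (3 ^ x₁ - 1) * (3 ^ x₂ - 1) = (5 ^ y₁ - 1) * (5 ^ y₂ - 1)) :
    x₁ = 1 ∧ x₂ = 2 ∧ y₁ = 1 ∧ y₂ = 1 := by
  have p31 : 1 ≤ 3 ^ x₁ := Nat.one_le_pow _ _ (by norm_num)
  have p32 : 1 ≤ 3 ^ x₂ := Nat.one_le_pow _ _ (by norm_num)
  have p51 : 1 ≤ 5 ^ y₁ := Nat.one_le_pow _ _ (by norm_num)
  have p52 : 1 ≤ 5 ^ y₂ := Nat.one_le_pow _ _ (by norm_num)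
  -- Step A : LHS % 3 = 1, hence y₁ y₂ odd
  have hL3 : ((3 ^ x₁ - 1) * (3 ^ x₂ - 1)) % 3 = 1 := by
    have d1 : (3:ℕ) ∣ 3 ^ x₁ := dvd_pow_self 3 (by omega)
    have d2 : (3:ℕ) ∣ 3 ^ x₂ := dvd_pow_self 3 (by omega)
    rw [Nat.mul_mod]
    have e1 : (3 ^ x₁ - 1) % 3 = 2 := by omega
    have e2 : (3 ^ x₂ - 1) % 3 = 2 := by omega
    rw [e1, e2]
  have hy1o : y₁ % 2 = 1 := by
    rcases Nat.mod_two_eq_zero_or_one y₁ with h0 | h1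
    · exfalso
      have hp := pow_period (x := 5) (t := 2) (q := 3) (by norm_num) (by norm_num) y₁
      rw [h0] at hp
      have e : 5 ^ y₁ % 3 = 5 ^ 0 % 3 := hp
      norm_num at e
      have hz : ((5 ^ y₁ - 1) * (5 ^ y₂ - 1)) % 3 = 0 := by
        rw [Nat.mul_mod]
        have e' : (5 ^ y₁ - 1) % 3 = 0 := by omega
        rw [e']
        simp
      omega
    · exact h1
  have hy2o : y₂ % 2 = 1 := by
    rcases Nat.mod_two_eq_zero_or_one y₂ with h0 | h1
    · exfalso
      have hp := pow_period (x := 5) (t := 2) (q := 3) (by norm_num) (by norm_num) y₂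
      rw [h0] at hp
      have e : 5 ^ y₂ % 3 = 5 ^ 0 % 3 := hp
      norm_num at e
      have hz : ((5 ^ y₁ - 1) * (5 ^ y₂ - 1)) % 3 = 0 := by
        rw [Nat.mul_mod]
        have e' : (5 ^ y₂ - 1) % 3 = 0 := by omega
        rw [e']
        simp
      omega
    · exact h1
  -- Step B : mod 13
  have h13 : ((3^(x₁%3)-1)*(3^(x₂%3)-1)) % 13 = ((5^(y₁%4)-1)*(5^(y₂%4)-1)) % 13 := by
    calc ((3^(x₁%3)-1)*(3^(x₂%3)-1)) % 13
        = ((3^x₁-1)*(3^x₂-1)) % 13 :=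
          (prodmod 13 (by norm_num) 3 3 (by norm_num) (by norm_num) x₁ x₂).symm
      _ = ((5^y₁-1)*(5^y₂-1)) % 13 := by rw [h]
      _ = ((5^(y₁%4)-1)*(5^(y₂%4)-1)) % 13 :=
          prodmod 13 (by norm_num) 5 4 (by norm_num) (by norm_num) y₁ y₂
  have hb1 : x₁ % 3 < 3 := Nat.mod_lt _ (by norm_num)
  have hb2 : x₂ % 3 < 3 := Nat.mod_lt _ (by norm_num)
  have hc4 : y₁ % 4 = 1 ∧ y₂ % 4 = 1 := by
    have hk : y₁ % 4 = 1 ∨ y₁ % 4 = 3 := by omega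
    have hl : y₂ % 4 = 1 ∨ y₂ % 4 = 3 := by omega
    rcases hk with hk | hk <;> rcases hl with hl | hl <;> rw [hk, hl] at h13 <;>
      norm_num at h13
    · exact ⟨hk, hl⟩
    · exact absurd h13 (aux13a _ hb1 _ hb2)
    · exact absurd h13 (aux13a _ hb1 _ hb2)
    · exact absurd h13 (aux13b _ hb1 _ hb2)
  obtain ⟨hc4, hd4⟩ := hc4
  have hL13 : ((3^(x₁%3)-1)*(3^(x₂%3)-1)) % 13 = 3 := by
    rw [hc4, hd4] at h13
    norm_num at h13
    exact h13
  -- Step C : y₁ = 1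
  have hy1e : y₁ = 1 := by
    by_contra hne
    have hy1ge : 2 ≤ y₁ := by omega
    have hy2ge : 2 ≤ y₂ := by omega
    have d1 : (25:ℕ) ∣ 5 ^ y₁ := by
      have h' : (5:ℕ)^2 ∣ 5 ^ y₁ := pow_dvd_pow 5 hy1ge
      simpa using h'
    have d2 : (25:ℕ) ∣ 5 ^ y₂ := by
      have h' : (5:ℕ)^2 ∣ 5 ^ y₂ := pow_dvd_pow 5 hy2ge
      simpa using h'
    have hR25 : ((5^y₁-1)*(5^y₂-1)) % 25 = 1 := by
      rw [Nat.mul_mod]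
      have e1 : (5^y₁-1) % 25 = 24 := by omega
      have e2 : (5^y₂-1) % 25 = 24 := by omega
      rw [e1, e2]
    have hL25 : ((3^(x₁%20)-1)*(3^(x₂%20)-1)) % 25 = 1 := by
      calc ((3^(x₁%20)-1)*(3^(x₂%20)-1)) % 25
          = ((3^x₁-1)*(3^x₂-1)) % 25 :=
            (prodmod 25 (by norm_num) 3 20 (by norm_num) (by norm_num) x₁ x₂).symm
        _ = ((5^y₁-1)*(5^y₂-1)) % 25 := by rw [h]
        _ = 1 := hR25
    have h31 : ((3^(x₁%30)-1)*(3^(x₂%30)-1)) % 31 = ((5^(y₁%3)-1)*(5^(y₂%3)-1)) % 31 := by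
      calc ((3^(x₁%30)-1)*(3^(x₂%30)-1)) % 31
          = ((3^x₁-1)*(3^x₂-1)) % 31 :=
            (prodmod 31 (by norm_num) 3 30 (by norm_num) (by norm_num) x₁ x₂).symm
        _ = ((5^y₁-1)*(5^y₂-1)) % 31 := by rw [h]
        _ = ((5^(y₁%3)-1)*(5^(y₂%3)-1)) % 31 :=
            prodmod 31 (by norm_num) 5 3 (by norm_num) (by norm_num) y₁ y₂
    have hS := auxS (y₁%3) (Nat.mod_lt _ (by norm_num)) (y₂%3) (Nat.mod_lt _ (by norm_num))
    rw [← h31] at hS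
    have r1 : x₁ % 20 = (x₁ % 60) % 20 := (Nat.mod_mod_of_dvd x₁ (by norm_num)).symm
    have r2 : x₂ % 20 = (x₂ % 60) % 20 := (Nat.mod_mod_of_dvd x₂ (by norm_num)).symm
    have r3 : x₁ % 3 = (x₁ % 60) % 3 := (Nat.mod_mod_of_dvd x₁ (by norm_num)).symm
    have r4 : x₂ % 3 = (x₂ % 60) % 3 := (Nat.mod_mod_of_dvd x₂ (by norm_num)).symm
    have r5 : x₁ % 30 = (x₁ % 60) % 30 := (Nat.mod_mod_of_dvd x₁ (by norm_num)).symm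
    have r6 : x₂ % 30 = (x₂ % 60) % 30 := (Nat.mod_mod_of_dvd x₂ (by norm_num)).symm
    rw [r1, r2] at hL25
    rw [r3, r4] at hL13
    rw [r5, r6] at hS
    exact aux60 (x₁%60) (Nat.mod_lt _ (by norm_num)) (x₂%60) (Nat.mod_lt _ (by norm_num))
      ⟨hL25, hL13, hS⟩
  -- Step D : x₁ = 1
  subst hy1e
  have hx1e : x₁ = 1 := by
    by_contra hne
    have ha2 : 2 ≤ x₁ := by omega
    have hb2' : 2 ≤ x₂ := by omega
    have d1 : (9:ℕ) ∣ 3 ^ x₁ := by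
      have h' : (3:ℕ)^2 ∣ 3 ^ x₁ := pow_dvd_pow 3 ha2
      simpa using h'
    have d2 : (9:ℕ) ∣ 3 ^ x₂ := by
      have h' : (3:ℕ)^2 ∣ 3 ^ x₂ := pow_dvd_pow 3 hb2'
      simpa using h'
    have hL9 : ((3^x₁-1)*(3^x₂-1)) % 9 = 1 := by
      rw [Nat.mul_mod]
      have e1 : (3^x₁-1) % 9 = 8 := by omega
      have e2 : (3^x₂-1) % 9 = 8 := by omega
      rw [e1, e2]
    have hR9 : ((5^(1%6)-1)*(5^(y₂%6)-1)) % 9 = 1 := by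
      calc ((5^(1%6)-1)*(5^(y₂%6)-1)) % 9
          = ((5^1-1)*(5^y₂-1)) % 9 :=
            (prodmod 9 (by norm_num) 5 6 (by norm_num) (by norm_num) 1 y₂).symm
        _ = ((3^x₁-1)*(3^x₂-1)) % 9 := by rw [h]
        _ = 1 := hL9
    have hd6 : y₂ % 6 = 3 := by
      rcases aux9 (y₂%6) (Nat.mod_lt _ (by norm_num)) with hbad | hgood
      · exact absurd hR9 hbad
      · exact hgood
    have h7 : ((3^(x₁%6)-1)*(3^(x₂%6)-1)) % 7 = ((5^(1%6)-1)*(5^(y₂%6)-1)) % 7 := by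
      calc ((3^(x₁%6)-1)*(3^(x₂%6)-1)) % 7
          = ((3^x₁-1)*(3^x₂-1)) % 7 :=
            (prodmod 7 (by norm_num) 3 6 (by norm_num) (by norm_num) x₁ x₂).symm
        _ = ((5^1-1)*(5^y₂-1)) % 7 := by rw [h]
        _ = ((5^(1%6)-1)*(5^(y₂%6)-1)) % 7 :=
            prodmod 7 (by norm_num) 5 6 (by norm_num) (by norm_num) 1 y₂
    rw [hd6] at h7
    have r3 : x₁ % 3 = (x₁ % 6) % 3 := (Nat.mod_mod_of_dvd x₁ (by norm_num)).symm
    have r4 : x₂ % 3 = (x₂ % 6) % 3 := (Nat.mod_mod_of_dvd x₂ (by norm_num)).symm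
    rw [r3, r4] at hL13
    exact auxD (x₁%6) (Nat.mod_lt _ (by norm_num)) (x₂%6) (Nat.mod_lt _ (by norm_num))
      ⟨hL13, h7⟩
  -- Step E : endgame  3^x₂ + 1 = 2 * 5^y₂
  subst hx1e
  have hE : 3 ^ x₂ + 1 = 2 * 5 ^ y₂ := by
    norm_num at h
    omega
  have hy2e : y₂ = 1 := by
    by_contra hne
    have hd2 : 2 ≤ y₂ := by omega
    have d25 : (25:ℕ) ∣ 5 ^ y₂ := by
      have h' : (5:ℕ)^2 ∣ 5 ^ y₂ := pow_dvd_pow 5 hd2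
      simpa using h'
    have e25 : 3 ^ x₂ % 25 = 24 := by omega
    have hred : 3 ^ x₂ % 25 = 3 ^ (x₂ % 20) % 25 :=
      pow_period (x := 3) (t := 20) (q := 25) (by norm_num) (by norm_num) x₂
    have hk : x₂ % 20 = 10 := by
      rcases aux25 (x₂%20) (Nat.mod_lt _ (by norm_num)) with hbad | hgood
      · exact absurd (by omega) hbad
      · exact hgood
    have hred2 : 3 ^ x₂ % 1181 = 3 ^ (x₂ % 20) % 1181 :=
      pow_period (x := 3) (t := 20) (q := 1181) (by norm_num) (by norm_num) x₂
    rw [hk] at hred2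
    norm_num at hred2
    have hdvd : (1181:ℕ) ∣ 2 * 5 ^ y₂ := by omega
    have hp : Nat.Prime 1181 := by norm_num
    rcases (Nat.Prime.dvd_mul hp).mp hdvd with h2 | h5
    · norm_num at h2
    · have h5' := Nat.Prime.dvd_of_dvd_pow hp h5
      norm_num at h5'
  subst hy2e
  have hx2e : x₂ = 2 := by
    have h9 : (3:ℕ) ^ x₂ = 3 ^ 2 := by norm_num at hE ⊢; omega
    exact Nat.pow_right_injective (by norm_num) h9
  exact ⟨rfl, hx2e, rfl, rfl⟩
end

section
/- There are no positive integers x₂ ≥ 2, y₁, y₂ satisfying 8·(3^x₂ - 1) = (5^y₁ - 1)(5^y₂ - 1). -/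
lemma aux9_s10 : ∀ k : ℕ, (9 * 729 ^ k : ZMod 819) = 9 := by
  intro k
  induction k with
  | zero => norm_num
  | succ n ih =>
    rw [pow_succ, ← mul_assoc, ih]
    decide

lemma pow3 (a : ℕ) : (9 * 3 ^ a : ZMod 819) = 9 * 3 ^ (a % 6) := by
  conv_lhs => rw [← Nat.div_add_mod a 6]
  rw [pow_add, pow_mul, ← mul_assoc]
  norm_num [aux9_s10]

lemma pow5 (y : ℕ) : (5 ^ y : ZMod 819) = 5 ^ (y % 12) := by
  conv_lhs => rw [← Nat.div_add_mod y 12]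
  rw [pow_add, pow_mul]
  have : ((5 : ZMod 819) ^ 12) = 1 := by decide
  rw [this, one_pow, one_mul]

lemma key : ∀ r < 6, ∀ s < 12, ∀ t < 12,
    (8 * (9 * 3 ^ r - 1) : ZMod 819) ≠ (5 ^ s - 1) * (5 ^ t - 1) := by decide

theorem stmt10 : ¬ ∃ (x₂ y₁ y₂ : ℕ), 2 ≤ x₂ ∧ 0 < y₁ ∧ 0 < y₂ ∧
    8 * (3 ^ x₂ - 1) = (5 ^ y₁ - 1) * (5 ^ y₂ - 1) := by
  rintro ⟨x₂, y₁, y₂, hx, hy1, hy2, h⟩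
  obtain ⟨a, rfl⟩ := Nat.exists_eq_add_of_le hx
  have h1 : 1 ≤ 3 ^ (2 + a) := Nat.one_le_pow _ _ (by norm_num)
  have h2 : 1 ≤ 5 ^ y₁ := Nat.one_le_pow _ _ (by norm_num)
  have h3 : 1 ≤ 5 ^ y₂ := Nat.one_le_pow _ _ (by norm_num)
  zify [h1, h2, h3] at h
  have hz := congrArg (Int.cast : ℤ → ZMod 819) h
  push_cast at hz
  rw [pow_add] at hz
  norm_num at hz
  rw [pow3, pow5 y₁, pow5 y₂] at hz
  exact key (a % 6) (Nat.mod_lt _ (by norm_num)) (y₁ % 12) (Nat.mod_lt _ (by norm_num))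
    (y₂ % 12) (Nat.mod_lt _ (by norm_num)) hz
end

section
/- If positive integers x₁, x₂, y₁, y₂ with x₁ ≤ x₂, y₁ ≤ y₂ satisfy (3^x₁ - 1)(3^x₂ - 1) = (5^y₁ - 1)(5^y₂ - 1) and 3^x₁ > 5^y₁, then |(5^y₁ - 1)·5^y₂/3^(x₁+x₂) - 1| < 3/3^x₁. -/
theorem stmt15 (x₁ x₂ y₁ y₂ : ℕ) (hx₁ : 0 < x₁) (hy₁ : 0 < y₁)
    (hx : x₁ ≤ x₂) (hy : y₁ ≤ y₂)
    (h : (3 ^ x₁ - 1) * (3 ^ x₂ - 1) = (5 ^ y₁ - 1) * (5 ^ y₂ - 1))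
    (hgt : 5 ^ y₁ < 3 ^ x₁) :
    |((5 : ℝ) ^ y₁ - 1) * 5 ^ y₂ / 3 ^ (x₁ + x₂) - 1| < 3 / 3 ^ x₁ := by
  have h3 : (1:ℕ) ≤ 3 ^ x₁ := Nat.one_le_pow _ _ (by norm_num)
  have h3' : (1:ℕ) ≤ 3 ^ x₂ := Nat.one_le_pow _ _ (by norm_num)
  have h5 : (1:ℕ) ≤ 5 ^ y₁ := Nat.one_le_pow _ _ (by norm_num)
  have h5' : (1:ℕ) ≤ 5 ^ y₂ := Nat.one_le_pow _ _ (by norm_num)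
  have hR : ((3:ℝ)^x₁ - 1) * ((3:ℝ)^x₂ - 1) = ((5:ℝ)^y₁ - 1) * ((5:ℝ)^y₂ - 1) := by
    have := congrArg (Nat.cast : ℕ → ℝ) h
    push_cast [h3, h3', h5, h5'] at this
    linarith [this]
  have hA : (0:ℝ) < 3 ^ x₁ := by positivity
  have hB : (0:ℝ) < 3 ^ x₂ := by positivity
  have hC : (0:ℝ) < 5 ^ y₁ := by positivity
  have hD : (0:ℝ) < 5 ^ y₂ := by positivity
  have hAB : (3:ℝ) ^ x₁ ≤ 3 ^ x₂ := by
    exact pow_le_pow_right₀ (by norm_num) hx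
  have hCA : (5:ℝ) ^ y₁ < 3 ^ x₁ := by exact_mod_cast hgt
  have key : ((5:ℝ)^y₁ - 1) * 5^y₂
      = 3^x₁ * 3^x₂ - 3^x₁ - 3^x₂ + 5^y₁ := by linear_combination -hR
  rw [pow_add]
  have heq : ((5:ℝ)^y₁ - 1) * 5^y₂ / (3^x₁ * 3^x₂) - 1
      = ((5:ℝ)^y₁ - 3^x₁ - 3^x₂) / (3^x₁ * 3^x₂) := by
    field_simp
    linear_combination key
  rw [heq, abs_div, abs_of_pos (by positivity : (0:ℝ) < 3^x₁ * 3^x₂),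
    abs_of_neg (by linarith : (5:ℝ)^y₁ - 3^x₁ - 3^x₂ < 0),
    div_lt_div_iff₀ (by positivity) hA]
  nlinarith [mul_pos hA hB]
end

section
/- If positive integers x₁, x₂, y₁, y₂ satisfy (3^x₁ - 1)(3^x₂ - 1) = (5^y₁ - 1)(5^y₂ - 1) and 3^x₁ < 5^y₁, then |(3^x₁ - 1)·3^x₂/((5^y₁ - 1)·5^y₂) - 1| < 3/5^y₂. -/
theorem stmt16 (x₁ x₂ y₁ y₂ : ℕ) (hx₁ : 0 < x₁) (hx₂ : 0 < x₂) (hy₁ : 0 < y₁) (hy₂ : 0 < y₂)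
    (h : (3 ^ x₁ - 1) * (3 ^ x₂ - 1) = (5 ^ y₁ - 1) * (5 ^ y₂ - 1))
    (hlt : 3 ^ x₁ < 5 ^ y₁) :
    |((3 : ℝ) ^ x₁ - 1) * 3 ^ x₂ / (((5 : ℝ) ^ y₁ - 1) * 5 ^ y₂) - 1| < 3 / 5 ^ y₂ := by
  have h3 : (1:ℕ) ≤ 3 ^ x₁ := Nat.one_le_pow _ _ (by norm_num)
  have h4 : (1:ℕ) ≤ 3 ^ x₂ := Nat.one_le_pow _ _ (by norm_num)
  have h5 : (1:ℕ) ≤ 5 ^ y₁ := Nat.one_le_pow _ _ (by norm_num)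
  have h6 : (1:ℕ) ≤ 5 ^ y₂ := Nat.one_le_pow _ _ (by norm_num)
  have hR : ((3:ℝ)^x₁ - 1)*((3:ℝ)^x₂ - 1) = ((5:ℝ)^y₁-1)*((5:ℝ)^y₂-1) := by
    have := congrArg (Nat.cast (R := ℝ)) h
    push_cast [h3, h4, h5, h6] at this
    exact this
  have haR : (3:ℝ) ≤ 3^x₁ := by
    calc (3:ℝ) = 3^1 := by norm_num
    _ ≤ 3^x₁ := pow_le_pow_right₀ (by norm_num) hx₁
  have hcR : (5:ℝ) ≤ 5^y₁ := by
    calc (5:ℝ) = 5^1 := by norm_num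
    _ ≤ 5^y₁ := pow_le_pow_right₀ (by norm_num) hy₁
  have hbR : (1:ℝ) ≤ 3^x₂ := one_le_pow₀ (by norm_num)
  have hltR : (3:ℝ)^x₁ < 5^y₁ := by exact_mod_cast hlt
  have hc1 : (0:ℝ) < 5^y₁ - 1 := by linarith
  have hd : (0:ℝ) < (5:ℝ)^y₂ := by positivity
  have key : ((3:ℝ)^x₁-1)*3^x₂/(((5:ℝ)^y₁-1)*5^y₂) - 1
      = ((3:ℝ)^x₁ - 5^y₁)/((5^y₁-1)*5^y₂) := by
    rw [div_sub_one (by positivity), div_eq_div_iff (by positivity) (by positivity)]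
    linear_combination (((5:ℝ)^y₁-1)*5^y₂) * hR
  rw [key, abs_div, abs_of_pos (mul_pos hc1 hd), abs_of_neg (by linarith : (3:ℝ)^x₁ - 5^y₁ < 0),
    div_lt_div_iff₀ (mul_pos hc1 hd) hd]
  nlinarith [mul_lt_mul_of_pos_right (show (5:ℝ)^y₁ - 3^x₁ < 3*(5^y₁-1) by linarith) hd]
end

section
/- If positive integers x₂, y₁, y₂ satisfy 2·(3^x₂ - 1) = (5^y₁ - 1)(5^y₂ - 1), then 5^(y₁+y₂-1) < 2·3^x₂, and consequently 0 < (5^y₁ - 1)·5^y₂/(2·3^x₂) - 1 < 5/5^y₂. -/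
theorem stmt17 (x₂ y₁ y₂ : ℕ) (hx₂ : 0 < x₂) (hy₁ : 0 < y₁) (hy₂ : 0 < y₂)
    (h : 2 * (3 ^ x₂ - 1) = (5 ^ y₁ - 1) * (5 ^ y₂ - 1)) :
    5 ^ (y₁ + y₂ - 1) < 2 * 3 ^ x₂ ∧
      0 < ((5 : ℝ) ^ y₁ - 1) * 5 ^ y₂ / (2 * 3 ^ x₂) - 1 ∧
        ((5 : ℝ) ^ y₁ - 1) * 5 ^ y₂ / (2 * 3 ^ x₂) - 1 < 5 / 5 ^ y₂ := by
  obtain ⟨m, rfl⟩ : ∃ m, y₁ = m + 1 := ⟨y₁ - 1, by omega⟩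
  obtain ⟨n, rfl⟩ : ∃ n, y₂ = n + 1 := ⟨y₂ - 1, by omega⟩
  have ha : 3 ≤ 3 ^ x₂ := by
    calc 3 = 3 ^ 1 := rfl
    _ ≤ 3 ^ x₂ := Nat.pow_le_pow_right (by norm_num) hx₂
  have hm : 1 ≤ 5 ^ m := Nat.one_le_pow _ _ (by norm_num)
  have hn : 1 ≤ 5 ^ n := Nat.one_le_pow _ _ (by norm_num)
  have key : 2 * 3 ^ x₂ = (5 ^ (m+1) - 1) * (5 ^ (n+1) - 1) + 2 := by
    set p := (5 ^ (m+1) - 1) * (5 ^ (n+1) - 1) with hp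
    omega
  have hnat : 5 ^ (m + 1 + (n + 1) - 1) < 2 * 3 ^ x₂ := by
    have e1 : m + 1 + (n + 1) - 1 = m + n + 1 := by omega
    rw [e1, key]
    have e2 : 5 ^ (m + 1) - 1 = 4 * 5 ^ m + (5 ^ m - 1) := by
      have : 5 ^ (m+1) = 5 * 5 ^ m := pow_succ' 5 m
      omega
    have e3 : 5 ^ (n + 1) - 1 = 4 * 5 ^ n + (5 ^ n - 1) := by
      have : 5 ^ (n+1) = 5 * 5 ^ n := pow_succ' 5 n
      omega
    have e4 : 5 ^ (m + n + 1) = 5 * (5 ^ m * 5 ^ n) := by ring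
    rw [e2, e3, e4]
    nlinarith [Nat.mul_le_mul hm hn]
  refine ⟨hnat, ?_⟩
  -- real part
  have hc1 : ((5 ^ (m+1) - 1 : ℕ) : ℝ) = (5:ℝ) ^ (m+1) - 1 := by
    rw [Nat.cast_sub (Nat.one_le_pow _ _ (by norm_num))]; push_cast; ring
  have hc2 : ((5 ^ (n+1) - 1 : ℕ) : ℝ) = (5:ℝ) ^ (n+1) - 1 := by
    rw [Nat.cast_sub (Nat.one_le_pow _ _ (by norm_num))]; push_cast; ring
  have keyR : (2:ℝ) * 3 ^ x₂ = ((5:ℝ) ^ (m+1) - 1) * ((5:ℝ) ^ (n+1) - 1) + 2 := by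
    have := congrArg (Nat.cast : ℕ → ℝ) key
    push_cast [hc1, hc2] at this
    linarith
  set B := (5:ℝ) ^ (m+1) with hB
  set C := (5:ℝ) ^ (n+1) with hC
  have hB5 : 5 ≤ B := by
    rw [hB]; calc (5:ℝ) = 5 ^ 1 := by norm_num
    _ ≤ 5 ^ (m+1) := by apply pow_le_pow_right₀ (by norm_num); omega
  have hC5 : 5 ≤ C := by
    rw [hC]; calc (5:ℝ) = 5 ^ 1 := by norm_num
    _ ≤ 5 ^ (n+1) := by apply pow_le_pow_right₀ (by norm_num); omega
  have hA : (0:ℝ) < 2 * 3 ^ x₂ := by positivity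
  have hCpos : (0:ℝ) < C := by linarith
  constructor
  · rw [sub_pos, lt_div_iff₀ hA]
    nlinarith
  · have heq : (B - 1) * C / (2 * 3 ^ x₂) - 1 = ((B - 1) * C - 2 * 3 ^ x₂) / (2 * 3 ^ x₂) := by
      field_simp
    rw [heq, div_lt_div_iff₀ hA hCpos]
    nlinarith [mul_le_mul hB5 hC5 (by norm_num) (by linarith : (0:ℝ) ≤ B)]
end

section
/- There are no positive integers x₂, y₁, y₂ with y₁ ≤ y₂ satisfying 2·(3^x₂ - 1) = (5^y₁ - 1)(5^y₂ - 1). -/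
private lemma cyc18 {m : ℕ} (a : ZMod m) {t : ℕ} (ht : a ^ t = 1) (x : ℕ) :
    a ^ x = a ^ (x % t) := by
  conv_lhs => rw [← Nat.div_add_mod x t]
  rw [pow_add, pow_mul, ht, one_pow, one_mul]

theorem stmt18 (x₂ y₁ y₂ : ℕ) (hx₂ : 0 < x₂) (hy₁ : 0 < y₁) (hy : y₁ ≤ y₂)
    (h : 2 * (3 ^ x₂ - 1) = (5 ^ y₁ - 1) * (5 ^ y₂ - 1)) :
    x₂ = 2 ∧ y₁ = 1 ∧ y₂ = 1 := by
  have h3 : 1 ≤ 3 ^ x₂ := Nat.one_le_pow _ _ (by norm_num)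
  have h5a : 1 ≤ 5 ^ y₁ := Nat.one_le_pow _ _ (by norm_num)
  have h5b : 1 ≤ 5 ^ y₂ := Nat.one_le_pow _ _ (by norm_num)
  have key : ∀ m : ℕ,
      2 * ((3 : ZMod m) ^ x₂ - 1) = ((5 : ZMod m) ^ y₁ - 1) * ((5 : ZMod m) ^ y₂ - 1) := by
    intro m
    have hc := congrArg (fun n : ℕ => (n : ZMod m)) h
    push_cast [Nat.cast_sub h3, Nat.cast_sub h5a, Nat.cast_sub h5b] at hc
    exact_mod_cast hc
  have z25 : ∀ y : ℕ, 2 ≤ y → (5 : ZMod 25) ^ y = 0 := by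
    intro y hy'
    obtain ⟨k, rfl⟩ : ∃ k, y = 2 + k := ⟨y - 2, by omega⟩
    rw [pow_add, show (5 : ZMod 25) ^ 2 = 0 from by decide, zero_mul]
  by_cases hc1 : 2 ≤ y₁
  · -- case y₁ ≥ 2 (hence y₂ ≥ 2): mod 25 gives x₂ ≡ 18 [20], mod 31 contradicts
    exfalso
    have e25 := key 25
    rw [z25 y₁ hc1, z25 y₂ (by omega), cyc18 (3 : ZMod 25) (by decide : (3:ZMod 25)^20 = 1) x₂]
      at e25
    have h20 : x₂ % 20 = 18 := by
      have := (by decide :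
        ∀ r < 20, 2 * ((3 : ZMod 25) ^ r - 1) = ((0:ZMod 25) - 1) * (0 - 1) → r = 18)
      exact this _ (Nat.mod_lt _ (by norm_num)) e25
    have e31 := key 31
    rw [cyc18 (3 : ZMod 31) (by decide : (3:ZMod 31)^30 = 1) x₂,
        cyc18 (5 : ZMod 31) (by decide : (5:ZMod 31)^3 = 1) y₁,
        cyc18 (5 : ZMod 31) (by decide : (5:ZMod 31)^3 = 1) y₂] at e31
    have hr : x₂ % 30 = 8 ∨ x₂ % 30 = 18 ∨ x₂ % 30 = 28 := by omega
    have key31 := (by decide :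
      ∀ r < 30, ∀ s < 3, ∀ u < 3, (r = 8 ∨ r = 18 ∨ r = 28) →
        2 * ((3 : ZMod 31) ^ r - 1) ≠ ((5 : ZMod 31) ^ s - 1) * ((5 : ZMod 31) ^ u - 1))
    exact key31 _ (Nat.mod_lt _ (by norm_num)) _ (Nat.mod_lt _ (by norm_num)) _
      (Nat.mod_lt _ (by norm_num)) hr e31
  · -- y₁ = 1
    have hy1 : y₁ = 1 := by omega
    subst hy1
    by_cases hc2 : y₂ = 1
    · subst hc2
      norm_num at h
      have hx : 3 ^ x₂ = 3 ^ 2 := by norm_num; omega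
      exact ⟨Nat.pow_right_injective (by norm_num) hx, rfl, rfl⟩
    · -- y₂ ≥ 2: mod 25 gives x₂ ≡ 10 [20], mod 31 gives y₂ ≡ 0 [3], mod 9 gives y₂ ≡ 1 [6]
      exfalso
      have e25 := key 25
      rw [pow_one, z25 y₂ (by omega), cyc18 (3 : ZMod 25) (by decide : (3:ZMod 25)^20 = 1) x₂]
        at e25
      have h20 : x₂ % 20 = 10 := by
        have := (by decide :
          ∀ r < 20, 2 * ((3 : ZMod 25) ^ r - 1) = ((5:ZMod 25) - 1) * ((0:ZMod 25) - 1) → r = 10)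
        exact this _ (Nat.mod_lt _ (by norm_num)) e25
      have e31 := key 31
      rw [pow_one, cyc18 (3 : ZMod 31) (by decide : (3:ZMod 31)^30 = 1) x₂,
          cyc18 (5 : ZMod 31) (by decide : (5:ZMod 31)^3 = 1) y₂] at e31
      have hr : x₂ % 30 = 0 ∨ x₂ % 30 = 10 ∨ x₂ % 30 = 20 := by omega
      have hy3 : y₂ % 3 = 0 := by
        have := (by decide :
          ∀ r < 30, ∀ u < 3, (r = 0 ∨ r = 10 ∨ r = 20) →
            2 * ((3 : ZMod 31) ^ r - 1) = ((5 : ZMod 31) - 1) * ((5 : ZMod 31) ^ u - 1) → u = 0)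
        exact this _ (Nat.mod_lt _ (by norm_num)) _ (Nat.mod_lt _ (by norm_num)) hr e31
      have e9 := key 9
      have hx2 : (3 : ZMod 9) ^ x₂ = 0 := by
        obtain ⟨k, rfl⟩ : ∃ k, x₂ = 2 + k := ⟨x₂ - 2, by omega⟩
        rw [pow_add, show (3 : ZMod 9) ^ 2 = 0 from by decide, zero_mul]
      rw [hx2, pow_one, cyc18 (5 : ZMod 9) (by decide : (5:ZMod 9)^6 = 1) y₂] at e9
      have hy6 : y₂ % 6 = 1 := by
        have := (by decide :
          ∀ u < 6, 2 * ((0:ZMod 9) - 1) = ((5 : ZMod 9) - 1) * ((5 : ZMod 9) ^ u - 1) → u = 1)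
        exact this _ (Nat.mod_lt _ (by norm_num)) e9
      omega
end

section
/- If positive integers x₁ ≤ x₂ and y₂ satisfy (3^x₁ - 1)(3^x₂ - 1) = 4·(5^y₂ - 1), then (x₁, x₂, y₂) = (1, 2, 1). -/
private lemma pow_mod_cycle {M : Type*} [Monoid M] (x : M) (k : ℕ) (hk : x ^ k = 1) (n : ℕ) :
    x ^ n = x ^ (n % k) := by
  conv_lhs => rw [← Nat.div_add_mod n k]
  rw [pow_add, pow_mul, hk, one_pow, one_mul]

theorem stmt19 (x₁ x₂ y₂ : ℕ) (hx₁ : 0 < x₁) (hy₂ : 0 < y₂) (hx : x₁ ≤ x₂)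
    (h : (3 ^ x₁ - 1) * (3 ^ x₂ - 1) = 4 * (5 ^ y₂ - 1)) :
    x₁ = 1 ∧ x₂ = 2 ∧ y₂ = 1 := by
  have h1 : 1 ≤ 3 ^ x₁ := Nat.one_le_pow _ _ (by norm_num)
  have h2 : 1 ≤ 3 ^ x₂ := Nat.one_le_pow _ _ (by norm_num)
  have h3 : 1 ≤ 5 ^ y₂ := Nat.one_le_pow _ _ (by norm_num)
  -- subtraction-free form of the equation
  have E : 3 ^ (x₁ + x₂) + 5 = 3 ^ x₁ + 3 ^ x₂ + 4 * 5 ^ y₂ := by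
    rw [pow_add]
    zify [h1, h2, h3] at h ⊢
    linear_combination h
  -- Step 1: y₂ is odd
  have hodd : y₂ % 2 = 1 := by
    have E' := congrArg (Nat.cast (R := ZMod 3)) E
    push_cast at E'
    have z3 : (3 : ZMod 3) = 0 := by decide
    rw [z3, zero_pow (by omega : x₁ + x₂ ≠ 0), zero_pow (by omega : x₁ ≠ 0),
      zero_pow (by omega : x₂ ≠ 0), pow_mod_cycle (5 : ZMod 3) 2 (by decide)] at E'
    rcases Nat.mod_two_eq_zero_or_one y₂ with hy | hy
    · rw [hy] at E'; exact absurd E' (by decide)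
    · exact hy
  -- Step 2: 3 ∤ x₁ and 3 ∤ x₂ (via mod 13)
  have hnd : x₁ % 3 ≠ 0 ∧ x₂ % 3 ≠ 0 := by
    have E' := congrArg (Nat.cast (R := ZMod 13)) E
    push_cast at E'
    rw [pow_mod_cycle (3 : ZMod 13) 3 (by decide) (x₁ + x₂),
      pow_mod_cycle (3 : ZMod 13) 3 (by decide) x₁,
      pow_mod_cycle (3 : ZMod 13) 3 (by decide) x₂,
      pow_mod_cycle (5 : ZMod 13) 4 (by decide)] at E'
    have hy4 : y₂ % 4 = 1 ∨ y₂ % 4 = 3 := by omega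
    constructor
    · intro h0
      have hab : (x₁ + x₂) % 3 = x₂ % 3 := by omega
      rw [h0, hab] at E'
      rcases hy4 with hy | hy <;> rw [hy] at E' <;>
        [skip; skip] <;>
      · have hb3 : x₂ % 3 < 3 := by omega
        revert E'
        rcases (by omega : x₂ % 3 = 0 ∨ x₂ % 3 = 1 ∨ x₂ % 3 = 2) with hb | hb | hb <;>
          rw [hb] <;> decide
    · intro h0
      have hab : (x₁ + x₂) % 3 = x₁ % 3 := by omega
      rw [h0, hab] at E'
      rcases hy4 with hy | hy <;> rw [hy] at E' <;>
      · revert E'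
        rcases (by omega : x₁ % 3 = 0 ∨ x₁ % 3 = 1 ∨ x₁ % 3 = 2) with hb | hb | hb <;>
          rw [hb] <;> decide
  -- Main case split
  have hx1 : x₁ = 1 := by
    by_contra hne
    have hx1' : 2 ≤ x₁ := by omega
    -- Step 3: mod 9 forces y₂ ≡ 3 [MOD 6], hence 3 ∣ y₂
    have hy6 : y₂ % 6 = 3 := by
      obtain ⟨a', rfl⟩ : ∃ a', x₁ = a' + 2 := ⟨x₁ - 2, by omega⟩
      have E' := congrArg (Nat.cast (R := ZMod 9)) E
      push_cast at E'
      have e1 : (3 : ZMod 9) ^ (a' + 2 + x₂) = 0 := by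
        have hre : a' + 2 + x₂ = a' + x₂ + 2 := by omega
        rw [hre, pow_add]; simp [show (3:ZMod 9)^2 = 0 by decide]
      have e2 : (3 : ZMod 9) ^ (a' + 2) = 0 := by
        rw [pow_add]; simp [show (3:ZMod 9)^2 = 0 by decide]
      have e3 : (3 : ZMod 9) ^ x₂ = 0 := by
        obtain ⟨b', rfl⟩ : ∃ b', x₂ = b' + 2 := ⟨x₂ - 2, by omega⟩
        rw [pow_add]; simp [show (3:ZMod 9)^2 = 0 by decide]
      rw [e1, e2, e3, pow_mod_cycle (5 : ZMod 9) 6 (by decide)] at E'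
      revert E'
      rcases (by omega : y₂ % 6 = 0 ∨ y₂ % 6 = 1 ∨ y₂ % 6 = 2 ∨ y₂ % 6 = 3 ∨ y₂ % 6 = 4 ∨
        y₂ % 6 = 5) with hy | hy | hy | hy | hy | hy <;> rw [hy] <;> decide
    -- Step 4: mod 31 contradiction
    have d1 : (5 : ZMod 31) ^ 3 = 1 := by decide
    have d2 : (3 : ZMod 31) ^ 30 = 1 := by decide
    have hunit : ∀ u : Fin 30, (u : ℕ) % 3 ≠ 0 → (3 : ZMod 31) ^ (u : ℕ) ≠ 1 := by decide
    haveI : Fact (Nat.Prime 31) := ⟨by norm_num⟩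
    have E' := congrArg (Nat.cast (R := ZMod 31)) E
    push_cast at E'
    have h5c : (5 : ZMod 31) ^ y₂ = 1 := by
      rw [pow_mod_cycle (5 : ZMod 31) 3 d1]
      have : y₂ % 3 = 0 := by omega
      rw [this, pow_zero]
    rw [h5c, pow_add] at E'
    have key : ((3 : ZMod 31) ^ x₁ - 1) * ((3 : ZMod 31) ^ x₂ - 1) = 0 := by
      linear_combination E'
    rcases mul_eq_zero.mp key with hk | hk
    · have : (3 : ZMod 31) ^ x₁ = 1 := by linear_combination hk
      rw [pow_mod_cycle (3 : ZMod 31) 30 d2] at this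
      exact hunit ⟨x₁ % 30, Nat.mod_lt _ (by norm_num)⟩ (by simp; omega) this
    · have : (3 : ZMod 31) ^ x₂ = 1 := by linear_combination hk
      rw [pow_mod_cycle (3 : ZMod 31) 30 d2] at this
      exact hunit ⟨x₂ % 30, Nat.mod_lt _ (by norm_num)⟩ (by simp; omega) this
  -- Now x₁ = 1
  subst hx1
  have F : 3 ^ x₂ + 1 = 2 * 5 ^ y₂ := by
    norm_num at h
    omega
  have hy1 : y₂ = 1 := by
    by_contra hne
    have hy2' : 2 ≤ y₂ := by omega
    obtain ⟨c', rfl⟩ : ∃ c', y₂ = c' + 2 := ⟨y₂ - 2, by omega⟩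
    -- mod 25 : x₂ % 20 = 10
    have hb20 : x₂ % 20 = 10 := by
      have F' := congrArg (Nat.cast (R := ZMod 25)) F
      push_cast at F'
      have e5 : (5 : ZMod 25) ^ (c' + 2) = 0 := by
        rw [pow_add]; simp [show (5:ZMod 25)^2 = 0 by decide]
      rw [e5, mul_zero, pow_mod_cycle (3 : ZMod 25) 20 (by decide)] at F'
      have key : ∀ u : Fin 20, (3 : ZMod 25) ^ (u : ℕ) + 1 = 0 → (u : ℕ) = 10 := by decide
      exact key ⟨x₂ % 20, Nat.mod_lt _ (by norm_num)⟩ F'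
    -- mod 1181 contradiction
    have d1 : (3 : ZMod 1181) ^ 20 = 1 := by decide
    have d2 : (3 : ZMod 1181) ^ 10 + 1 = 0 := by decide
    have d3 : (2 : ZMod 1181) ≠ 0 := by decide
    have d4 : (5 : ZMod 1181) ≠ 0 := by decide
    haveI : Fact (Nat.Prime 1181) := ⟨by norm_num⟩
    have F' := congrArg (Nat.cast (R := ZMod 1181)) F
    push_cast at F'
    rw [pow_mod_cycle (3 : ZMod 1181) 20 d1, hb20] at F'
    have hz : (2 : ZMod 1181) * 5 ^ (c' + 2) = 0 := by rw [← F']; exact d2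
    exact (mul_ne_zero d3 (pow_ne_zero _ d4)) hz
  subst hy1
  refine ⟨rfl, ?_, rfl⟩
  have : 3 ^ x₂ = 3 ^ 2 := by norm_num at F ⊢; omega
  exact Nat.pow_right_injective (by norm_num) this
end
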